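/- Let k ≥ 1 and let Γ be a 4k × 3 tableau with entries in {1,…,6}, strictly increasing rows, non-decreasing columns, no row containing both t and 7−t, and each value appearing exactly 2k times. If row 1 equals (1,3,5), then every row i with 1 ≤ i ≤ 2k equals (1,3,5) and every row i with 2k+1 ≤ i ≤ 4k equals (2,4,6). -/
import Mathlib

open Finset

lemma card_single_col {n : ℕ} (Γ : Fin n → Fin 3 → ℕ) (t : ℕ) (j₀ : Fin 3)
    (h : ∀ i j, Γ i j = t → j = j₀) :
    (Finset.univ.filter fun p : Fin n × Fin 3 => Γ p.1 p.2 = t).card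
      = (Finset.univ.filter fun i : Fin n => Γ i j₀ = t).card := by
  apply Finset.card_bij (fun p _ => p.1)
  · intro p hp
    simp only [mem_filter, mem_univ, true_and] at hp ⊢
    rw [← h p.1 p.2 hp]; exact hp
  · intro p hp q hq hpq
    simp only [mem_filter, mem_univ, true_and] at hp hq
    exact Prod.ext hpq (by rw [h p.1 p.2 hp, h q.1 q.2 hq])
  · intro i hi
    simp only [mem_filter, mem_univ, true_and] at hi
    exact ⟨(i, j₀), by simp [hi], rfl⟩

lemma lower_filter {n m : ℕ} (P : Fin n → Prop) [DecidablePred P]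
    (hd : ∀ i i' : Fin n, i ≤ i' → P i' → P i)
    (hc : (Finset.univ.filter P).card = m) :
    ∀ i : Fin n, P i ↔ (i : ℕ) < m := by
  intro i
  constructor
  · intro hP
    have hsub : Finset.Iic i ⊆ Finset.univ.filter P := by
      intro i' hi'
      simp only [Finset.mem_Iic] at hi'
      exact Finset.mem_filter.mpr ⟨Finset.mem_univ _, hd i' i hi' hP⟩
    have := Finset.card_le_card hsub
    rw [hc, Fin.card_Iic] at this
    omega
  · intro hi
    by_contra hP
    have hsub : Finset.univ.filter P ⊆ Finset.Iio i := by
      intro i' hi'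
      simp only [Finset.mem_filter] at hi'
      simp only [Finset.mem_Iio]
      by_contra hle
      exact hP (hd i i' (le_of_not_gt hle) hi'.2)
    have := Finset.card_le_card hsub
    rw [hc, Fin.card_Iio] at this
    omega

lemma upper_filter {n m : ℕ} (P : Fin n → Prop) [DecidablePred P]
    (hd : ∀ i i' : Fin n, i ≤ i' → P i → P i')
    (hc : (Finset.univ.filter P).card = m) :
    ∀ i : Fin n, P i ↔ n - m ≤ (i : ℕ) := by
  intro i
  have hin : (i : ℕ) < n := i.isLt
  constructor
  · intro hP
    have hsub : Finset.Ici i ⊆ Finset.univ.filter P := by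
      intro i' hi'
      simp only [Finset.mem_Ici] at hi'
      exact Finset.mem_filter.mpr ⟨Finset.mem_univ _, hd i i' hi' hP⟩
    have := Finset.card_le_card hsub
    rw [hc, Fin.card_Ici] at this
    omega
  · intro hi
    by_contra hP
    have hsub : Finset.univ.filter P ⊆ Finset.Ioi i := by
      intro i' hi'
      simp only [Finset.mem_filter] at hi'
      simp only [Finset.mem_Ioi]
      by_contra hle
      exact hP (hd i' i (le_of_not_gt hle) hi'.2)
    have := Finset.card_le_card hsub
    rw [hc, Fin.card_Ioi] at this
    omega

/-- For a `4k × 3` tableau with entries in `{1,…,6}`, strictly increasing rows,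
non-decreasing columns, no row containing both `t` and `7 - t`, and each value
appearing exactly `2k` times: if the first row is `(1,3,5)` then rows
`1,…,2k` all equal `(1,3,5)` and rows `2k+1,…,4k` all equal `(2,4,6)`
(rows indexed from `0` here). -/
theorem spin7_P3_row135 (k : ℕ) (hk : 1 ≤ k) (Γ : Fin (4 * k) → Fin 3 → ℕ)
    (hval : ∀ i j, 1 ≤ Γ i j ∧ Γ i j ≤ 6)
    (hrow : ∀ i, ∀ j j' : Fin 3, j < j' → Γ i j < Γ i j')
    (hcol : ∀ i i' : Fin (4 * k), i ≤ i' → ∀ j, Γ i j ≤ Γ i' j)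
    (hno : ∀ i, ∀ t : ℕ, 1 ≤ t → t ≤ 6 → ∀ j j' : Fin 3, Γ i j = t → Γ i j' ≠ 7 - t)
    (hcount : ∀ t : ℕ, 1 ≤ t → t ≤ 6 →
      (Finset.univ.filter fun p : Fin (4 * k) × Fin 3 => Γ p.1 p.2 = t).card = 2 * k)
    (hfirst : (Γ ⟨0, by omega⟩ 0, Γ ⟨0, by omega⟩ 1, Γ ⟨0, by omega⟩ 2) = (1, 3, 5)) :
    ∀ i : Fin (4 * k),
      ((i : ℕ) < 2 * k → (Γ i 0, Γ i 1, Γ i 2) = (1, 3, 5)) ∧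
      (2 * k ≤ (i : ℕ) → (Γ i 0, Γ i 1, Γ i 2) = (2, 4, 6)) := by
  set i0 : Fin (4 * k) := ⟨0, by omega⟩ with hi0
  rw [Prod.ext_iff, Prod.ext_iff] at hfirst
  obtain ⟨hf1, hf3, hf5⟩ := hfirst
  simp only at hf1 hf3 hf5
  have h01 : ∀ i, Γ i 0 < Γ i 1 := fun i => hrow i 0 1 (by decide)
  have h12 : ∀ i, Γ i 1 < Γ i 2 := fun i => hrow i 1 2 (by decide)
  have hi0le : ∀ i : Fin (4 * k), i0 ≤ i := fun i => Fin.mk_le_of_le_val (Nat.zero_le _)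
  have hc1 : ∀ i, 3 ≤ Γ i 1 := by
    intro i; have h := hcol i0 i (hi0le i) 1; omega
  have hc2 : ∀ i, 5 ≤ Γ i 2 := by
    intro i; have h := hcol i0 i (hi0le i) 2; omega
  -- value 1 : only column 0
  have honly1 : ∀ (i : Fin (4 * k)) (j : Fin 3), Γ i j = 1 → j = 0 := by
    intro i j hj
    fin_cases j
    · rfl
    · exfalso
      have hj' : Γ i 1 = 1 := hj
      have := h01 i; have := (hval i 0).1; omega
    · exfalso
      have hj' : Γ i 2 = 1 := hj
      have := hc2 i; omega
  have hone : ∀ i : Fin (4 * k), Γ i 0 = 1 ↔ (i : ℕ) < 2 * k := by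
    apply lower_filter
    · intro i i' hle hP
      have := hcol i i' hle 0
      have := (hval i 0).1
      omega
    · rw [← hcount 1 (by norm_num) (by norm_num)]
      exact (card_single_col Γ 1 0 honly1).symm
  -- value 6 : only column 2
  have honly6 : ∀ (i : Fin (4 * k)) (j : Fin 3), Γ i j = 6 → j = 2 := by
    intro i j hj
    fin_cases j
    · exfalso
      have hj' : Γ i 0 = 6 := hj
      have := h01 i; have := h12 i; have := (hval i 2).2; omega
    · exfalso
      have hj' : Γ i 1 = 6 := hj
      have := h12 i; have := (hval i 2).2; omega
    · rfl
  have hsix : ∀ i : Fin (4 * k), Γ i 2 = 6 ↔ 2 * k ≤ (i : ℕ) := by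
    have h := upper_filter (n := 4 * k) (m := 2 * k) (fun i => Γ i 2 = 6)
      (by
        intro i i' hle hP
        have := hcol i i' hle 2
        have := (hval i' 2).2
        omega)
      (by
        rw [← hcount 6 (by norm_num) (by norm_num)]
        exact (card_single_col Γ 6 2 honly6).symm)
    intro i
    exact (h i).trans (by omega)
  -- value 2 : only column 0
  have honly2 : ∀ (i : Fin (4 * k)) (j : Fin 3), Γ i j = 2 → j = 0 := by
    intro i j hj
    fin_cases j
    · rfl
    · exfalso
      have hj' : Γ i 1 = 2 := hj
      have := hc1 i; omega
    · exfalso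
      have hj' : Γ i 2 = 2 := hj
      have := hc2 i; omega
  have htwo : ∀ i : Fin (4 * k), 2 * k ≤ (i : ℕ) → Γ i 0 = 2 := by
    have hcard2 : (Finset.univ.filter fun i : Fin (4 * k) => Γ i 0 = 2).card = 2 * k := by
      rw [← hcount 2 (by norm_num) (by norm_num)]
      exact (card_single_col Γ 2 0 honly2).symm
    have hsub : (Finset.univ.filter fun i : Fin (4 * k) => Γ i 0 = 2)
        ⊆ (Finset.univ.filter fun i : Fin (4 * k) => 2 * k ≤ (i : ℕ)) := by
      intro i hi
      simp only [Finset.mem_filter, Finset.mem_univ, true_and] at hi ⊢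
      have h1 := hone i
      omega
    have hcardU : (Finset.univ.filter fun i : Fin (4 * k) => 2 * k ≤ (i : ℕ)).card ≤ 2 * k := by
      have hs : (Finset.univ.filter fun i : Fin (4 * k) => 2 * k ≤ (i : ℕ))
          ⊆ Finset.Ici (⟨2 * k, by omega⟩ : Fin (4 * k)) := by
        intro i hi
        simp only [Finset.mem_filter, Finset.mem_univ, true_and] at hi
        exact Finset.mem_Ici.mpr (Fin.mk_le_of_le_val hi)
      have h := Finset.card_le_card hs
      rw [Fin.card_Ici] at h
      have hv : ((⟨2 * k, by omega⟩ : Fin (4 * k)) : ℕ) = 2 * k := rfl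
      omega
    have heq := Finset.eq_of_subset_of_card_le hsub (by omega)
    intro i hi
    have hmem : i ∈ (Finset.univ.filter fun i : Fin (4 * k) => Γ i 0 = 2) := by
      rw [heq]
      simp [hi]
    simpa using hmem
  -- value 5 : only column 2 for rows < 2k
  have hfive : ∀ i : Fin (4 * k), (i : ℕ) < 2 * k → Γ i 2 = 5 := by
    intro i hi
    have h6 := hsix i
    have := (hval i 2).2
    have := hc2 i
    omega
  -- value 3 : only column 1
  have honly3 : ∀ (i : Fin (4 * k)) (j : Fin 3), Γ i j = 3 → j = 1 := by
    intro i j hj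
    fin_cases j
    · exfalso
      have hj' : Γ i 0 = 3 := hj
      rcases lt_or_ge (i : ℕ) (2 * k) with h | h
      · have := (hone i).mpr h; omega
      · have := htwo i h; omega
    · rfl
    · exfalso
      have hj' : Γ i 2 = 3 := hj
      have := hc2 i; omega
  have hthree : ∀ i : Fin (4 * k), Γ i 1 = 3 ↔ (i : ℕ) < 2 * k := by
    apply lower_filter
    · intro i i' hle hP
      have := hcol i i' hle 1
      have := hc1 i
      omega
    · rw [← hcount 3 (by norm_num) (by norm_num)]
      exact (card_single_col Γ 3 1 honly3).symm
  intro i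
  constructor
  · intro hi
    have e1 : Γ i 0 = 1 := (hone i).mpr hi
    have e3 : Γ i 1 = 3 := (hthree i).mpr hi
    have e5 : Γ i 2 = 5 := hfive i hi
    simp [e1, e3, e5]
  · intro hi
    have e2 : Γ i 0 = 2 := htwo i hi
    have e6 : Γ i 2 = 6 := (hsix i).mpr hi
    have e4 : Γ i 1 = 4 := by
      have h3 : Γ i 1 ≠ 3 := by
        intro h; exact absurd ((hthree i).mp h) (by omega)
      have h5 : Γ i 1 ≠ 5 := by
        have := hno i 2 (by norm_num) (by norm_num) 0 1 e2
        simpa using this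
      have := h01 i
      have := h12 i
      omega
    simp [e2, e4, e6]
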